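/- arXiv:2304.07924 — 4 statements merged into one kernel-verified Lean document; each statement's English description precedes it below -/
import Mathlib

section
/- The class of hybrid zonotopes is closed under Minkowski sum: given hybrid zonotopes Z₁ = ⟨G₁^c, G₁^b, c₁, A₁^c, A₁^b, b₁⟩ and Z₂ = ⟨G₂^c, G₂^b, c₂, A₂^c, A₂^b, b₂⟩ in ℝ^n, their Minkowski sum Z₁ ⊕ Z₂ equals the hybrid zonotope with continuous generators [G₁^c G₂^c], binary generators [G₁^b G₂^b], center c₁ + c₂, and block-diagonal constraints diag(A₁^c, A₂^c), diag(A₁^b, A₂^b), (b₁, b₂). -/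
/-- The hybrid zonotope with generator matrices `Gc`, `Gb`, center `c`,
and constraint data `Ac`, `Ab`, `b` (Definition 2 of the paper). -/
def HybZono {n g bi nc : Type*} [Fintype g] [Fintype bi] [Fintype nc]
    (Gc : Matrix n g ℝ) (Gb : Matrix n bi ℝ) (c : n → ℝ)
    (Ac : Matrix nc g ℝ) (Ab : Matrix nc bi ℝ) (b : nc → ℝ) : Set (n → ℝ) :=
  {z | ∃ ξc : g → ℝ, ∃ ξb : bi → ℝ,
    (∀ i, |ξc i| ≤ 1) ∧ (∀ i, ξb i = 1 ∨ ξb i = -1) ∧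
    Ac.mulVec ξc + Ab.mulVec ξb = b ∧
    z = Gc.mulVec ξc + Gb.mulVec ξb + c}

/-! Write the coefficients of the combined zonotope as `(ξ₁, ξ₂)` along `g₁ ⊕ g₂` and `b₁ ⊕ b₂`.
The box and binary conditions split coordinatewise, the block-diagonal constraints decouple into
those of the two summands, and `[G₁ G₂]` sends `(ξ₁, ξ₂)` to `G₁ ξ₁ + G₂ ξ₂`. -/

open Matrix Set
open scoped Pointwise

theorem Matrix.fromBlocks_zero_zero_mulVec_sumElim {l m n o R : Type*} [Fintype l] [Fintype m]
    [NonUnitalNonAssocSemiring R] (A : Matrix n l R) (D : Matrix o m R) (x : l → R)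
    (y : m → R) :
    fromBlocks A 0 0 D *ᵥ Sum.elim x y = Sum.elim (A *ᵥ x) (D *ᵥ y) := by
  simp [fromBlocks_mulVec]

section Block

variable {n g₁ g₂ b₁ b₂ k₁ k₂ : Type*} [Fintype g₁] [Fintype g₂] [Fintype b₁] [Fintype b₂]
  (Gc₁ : Matrix n g₁ ℝ) (Gb₁ : Matrix n b₁ ℝ) (c₁ : n → ℝ)
  (Ac₁ : Matrix k₁ g₁ ℝ) (Ab₁ : Matrix k₁ b₁ ℝ) (b₁' : k₁ → ℝ)
  (Gc₂ : Matrix n g₂ ℝ) (Gb₂ : Matrix n b₂ ℝ) (c₂ : n → ℝ)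
  (Ac₂ : Matrix k₂ g₂ ℝ) (Ab₂ : Matrix k₂ b₂ ℝ) (b₂' : k₂ → ℝ)

theorem fromBlocks_constraint_sumElim_iff (ξc₁ : g₁ → ℝ) (ξc₂ : g₂ → ℝ) (ξb₁ : b₁ → ℝ)
    (ξb₂ : b₂ → ℝ) :
    fromBlocks Ac₁ 0 0 Ac₂ *ᵥ Sum.elim ξc₁ ξc₂ + fromBlocks Ab₁ 0 0 Ab₂ *ᵥ Sum.elim ξb₁ ξb₂ =
        Sum.elim b₁' b₂' ↔
      Ac₁ *ᵥ ξc₁ + Ab₁ *ᵥ ξb₁ = b₁' ∧ Ac₂ *ᵥ ξc₂ + Ab₂ *ᵥ ξb₂ = b₂' := by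
  rw [fromBlocks_zero_zero_mulVec_sumElim, fromBlocks_zero_zero_mulVec_sumElim,
    ← Sum.elim_add_add, Sum.elim_eq_iff]

theorem fromCols_generators_sumElim (ξc₁ : g₁ → ℝ) (ξc₂ : g₂ → ℝ) (ξb₁ : b₁ → ℝ)
    (ξb₂ : b₂ → ℝ) :
    fromCols Gc₁ Gc₂ *ᵥ Sum.elim ξc₁ ξc₂ + fromCols Gb₁ Gb₂ *ᵥ Sum.elim ξb₁ ξb₂ + (c₁ + c₂) =
      (Gc₁ *ᵥ ξc₁ + Gb₁ *ᵥ ξb₁ + c₁) + (Gc₂ *ᵥ ξc₂ + Gb₂ *ᵥ ξb₂ + c₂) := by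
  rw [fromCols_mulVec_sumElim, fromCols_mulVec_sumElim]
  abel

theorem hybZono_fromCols_fromBlocks [Fintype k₁] [Fintype k₂] :
    HybZono (fromCols Gc₁ Gc₂) (fromCols Gb₁ Gb₂) (c₁ + c₂) (fromBlocks Ac₁ 0 0 Ac₂)
        (fromBlocks Ab₁ 0 0 Ab₂) (Sum.elim b₁' b₂') =
      HybZono Gc₁ Gb₁ c₁ Ac₁ Ab₁ b₁' + HybZono Gc₂ Gb₂ c₂ Ac₂ Ab₂ b₂' := by
  ext z
  constructor
  · rintro ⟨ξc, ξb, hξc, hξb, hA, rfl⟩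
    rw [← Sum.elim_comp_inl_inr ξc, ← Sum.elim_comp_inl_inr ξb] at hA ⊢
    obtain ⟨hA₁, hA₂⟩ := (fromBlocks_constraint_sumElim_iff ..).1 hA
    rw [fromCols_generators_sumElim]
    exact add_mem_add
      ⟨_, _, fun i => hξc (.inl i), fun i => hξb (.inl i), hA₁, rfl⟩
      ⟨_, _, fun i => hξc (.inr i), fun i => hξb (.inr i), hA₂, rfl⟩
  · rintro ⟨_, ⟨ξc₁, ξb₁, hξc₁, hξb₁, hA₁, rfl⟩, _, ⟨ξc₂, ξb₂, hξc₂, hξb₂, hA₂, rfl⟩, rfl⟩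
    exact ⟨Sum.elim ξc₁ ξc₂, Sum.elim ξb₁ ξb₂, Sum.forall.2 ⟨hξc₁, hξc₂⟩,
      Sum.forall.2 ⟨hξb₁, hξb₂⟩, (fromBlocks_constraint_sumElim_iff ..).2 ⟨hA₁, hA₂⟩,
      (fromCols_generators_sumElim ..).symm⟩

end Block

/-- hybrid zonotopes are closed under Minkowski sum. -/
theorem hybZono_minkowski_sum {n ng1 nb1 nc1 ng2 nb2 nc2 : ℕ}
    (Gc1 : Matrix (Fin n) (Fin ng1) ℝ) (Gb1 : Matrix (Fin n) (Fin nb1) ℝ) (c1 : Fin n → ℝ)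
    (Ac1 : Matrix (Fin nc1) (Fin ng1) ℝ) (Ab1 : Matrix (Fin nc1) (Fin nb1) ℝ) (b1 : Fin nc1 → ℝ)
    (Gc2 : Matrix (Fin n) (Fin ng2) ℝ) (Gb2 : Matrix (Fin n) (Fin nb2) ℝ) (c2 : Fin n → ℝ)
    (Ac2 : Matrix (Fin nc2) (Fin ng2) ℝ) (Ab2 : Matrix (Fin nc2) (Fin nb2) ℝ) (b2 : Fin nc2 → ℝ) :
    {z | ∃ z1 ∈ HybZono Gc1 Gb1 c1 Ac1 Ab1 b1, ∃ z2 ∈ HybZono Gc2 Gb2 c2 Ac2 Ab2 b2,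
        z = z1 + z2} =
      HybZono (Matrix.fromCols Gc1 Gc2) (Matrix.fromCols Gb1 Gb2) (c1 + c2)
        (Matrix.fromBlocks Ac1 0 0 Ac2) (Matrix.fromBlocks Ab1 0 0 Ab2)
        (Sum.elim b1 b2) := by
  rw [hybZono_fromCols_fromBlocks]
  ext z
  simp only [mem_ofPred_eq, mem_add, eq_comm]
end

section
/- The class of hybrid zonotopes is closed under Cartesian product: given hybrid zonotopes Z₁ ⊆ ℝ^{n₁} and Z₂ ⊆ ℝ^{n₂} with data (G₁^c, G₁^b, c₁, A₁^c, A₁^b, b₁) and (G₂^c, G₂^b, c₂, A₂^c, A₂^b, b₂), the set Z₁ × Z₂ = {(z₁, z₂) : z₁ ∈ Z₁, z₂ ∈ Z₂} ⊆ ℝ^{n₁+n₂} equals the hybrid zonotope with block-diagonal generator matrices diag(G₁^c, G₂^c), diag(G₁^b, G₂^b), center (c₁, c₂), and block-diagonal constraint matrices diag(A₁^c, A₂^c), diag(A₁^b, A₂^b), vector (b₁, b₂). -/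
/-- hybrid zonotopes are closed under Cartesian product. -/
theorem hybZono_cartesian_product {n1 n2 ng1 nb1 nc1 ng2 nb2 nc2 : ℕ}
    (Gc1 : Matrix (Fin n1) (Fin ng1) ℝ) (Gb1 : Matrix (Fin n1) (Fin nb1) ℝ) (c1 : Fin n1 → ℝ)
    (Ac1 : Matrix (Fin nc1) (Fin ng1) ℝ) (Ab1 : Matrix (Fin nc1) (Fin nb1) ℝ) (b1 : Fin nc1 → ℝ)
    (Gc2 : Matrix (Fin n2) (Fin ng2) ℝ) (Gb2 : Matrix (Fin n2) (Fin nb2) ℝ) (c2 : Fin n2 → ℝ)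
    (Ac2 : Matrix (Fin nc2) (Fin ng2) ℝ) (Ab2 : Matrix (Fin nc2) (Fin nb2) ℝ) (b2 : Fin nc2 → ℝ) :
    {z : Fin n1 ⊕ Fin n2 → ℝ | ∃ z1 ∈ HybZono Gc1 Gb1 c1 Ac1 Ab1 b1,
        ∃ z2 ∈ HybZono Gc2 Gb2 c2 Ac2 Ab2 b2, z = Sum.elim z1 z2} =
      HybZono (Matrix.fromBlocks Gc1 0 0 Gc2) (Matrix.fromBlocks Gb1 0 0 Gb2)
        (Sum.elim c1 c2)
        (Matrix.fromBlocks Ac1 0 0 Ac2) (Matrix.fromBlocks Ab1 0 0 Ab2)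
        (Sum.elim b1 b2) := by
  ext z
  simp only [Set.mem_setOf_eq, HybZono]
  constructor
  · rintro ⟨z1, ⟨ξc1, ξb1, h1, h2, h3, h4⟩, z2, ⟨ξc2, ξb2, g1, g2, g3, g4⟩, rfl⟩
    refine ⟨Sum.elim ξc1 ξc2, Sum.elim ξb1 ξb2, ?_, ?_, ?_, ?_⟩
    · rintro (i | i) <;> [exact h1 i; exact g1 i]
    · rintro (i | i) <;> [exact h2 i; exact g2 i]
    · simp only [Matrix.fromBlocks_mulVec, Sum.elim_comp_inl, Sum.elim_comp_inr,
        Matrix.zero_mulVec, add_zero, zero_add]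
      funext i
      cases i with
      | inl i => simpa using congrFun h3 i
      | inr i => simpa using congrFun g3 i
    · simp only [Matrix.fromBlocks_mulVec, Sum.elim_comp_inl, Sum.elim_comp_inr,
        Matrix.zero_mulVec, add_zero, zero_add]
      funext i
      cases i with
      | inl i => simpa using congrFun h4 i
      | inr i => simpa using congrFun g4 i
  · rintro ⟨ξc, ξb, h1, h2, h3, h4⟩
    simp only [Matrix.fromBlocks_mulVec, Matrix.zero_mulVec, add_zero, zero_add] at h3 h4
    refine ⟨_, ⟨ξc ∘ Sum.inl, ξb ∘ Sum.inl, fun i => h1 _, fun i => h2 _,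
        ?_, rfl⟩, _, ⟨ξc ∘ Sum.inr, ξb ∘ Sum.inr, fun i => h1 _, fun i => h2 _,
        ?_, rfl⟩, ?_⟩
    · funext i; simpa using congrFun h3 (Sum.inl i)
    · funext i; simpa using congrFun h3 (Sum.inr i)
    · funext i
      cases i with
      | inl i => simpa using congrFun h4 (Sum.inl i)
      | inr i => simpa using congrFun h4 (Sum.inr i)
end

section
/- The class of hybrid zonotopes is closed under generalized intersection: given hybrid zonotopes Z ⊆ ℝ^n and Y ⊆ ℝ^m with data (G_z^c, G_z^b, c_z, A_z^c, A_z^b, b_z) and (G_y^c, G_y^b, c_y, A_y^c, A_y^b, b_y), and a matrix R ∈ ℝ^{m×n}, the set Z ∩_R Y = {z ∈ Z : Rz ∈ Y} equals the hybrid zonotope with continuous generators [G_z^c 0], binary generators [G_z^b 0], center c_z, and constraints combining the constraints of Z, the constraints of Y, and the coupling constraint R G_z^c ξ_z^c + R G_z^b ξ_z^b − G_y^c ξ_y^c − G_y^b ξ_y^b = c_y − R c_z. -/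
/-!
A point `z` of `Z ∩_R Y` comes with factors `(ξ_z^c, ξ_z^b)` of `Z` and `(ξ_y^c, ξ_y^b)` of `Y`
for `R z`. Concatenated, they are factors of the new hybrid zonotope: the zero generator
columns hide the `Y`-factors from the point itself, the block-diagonal constraint rows impose
the constraints of `Z` and of `Y` separately, and the coupling row says exactly that `R z` is
the point of `Y` produced by `(ξ_y^c, ξ_y^b)`. Conversely every factor vector of the new
hybrid zonotope splits into such a pair.
-/

open Matrix

theorem mem_hybZono_fromCols_zero_iff {n g g' k k' r : Type*} [Fintype g] [Fintype g']
    [Fintype k] [Fintype k'] [Fintype r]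
    (Gc : Matrix n g ℝ) (Gb : Matrix n k ℝ) (c : n → ℝ)
    (Ac : Matrix r (g ⊕ g') ℝ) (Ab : Matrix r (k ⊕ k') ℝ) (b : r → ℝ) (z : n → ℝ) :
    z ∈ HybZono (fromCols Gc 0) (fromCols Gb 0) c Ac Ab b ↔
      ∃ (ξc : g → ℝ) (ξc' : g' → ℝ) (ξb : k → ℝ) (ξb' : k' → ℝ),
        (∀ i, |ξc i| ≤ 1) ∧ (∀ i, |ξc' i| ≤ 1) ∧
        (∀ i, ξb i = 1 ∨ ξb i = -1) ∧ (∀ i, ξb' i = 1 ∨ ξb' i = -1) ∧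
        Ac *ᵥ Sum.elim ξc ξc' + Ab *ᵥ Sum.elim ξb ξb' = b ∧
        z = Gc *ᵥ ξc + Gb *ᵥ ξb + c := by
  constructor
  · rintro ⟨ξc, ξb, hξc, hξb, hA, hz⟩
    rw [← Sum.elim_comp_inl_inr ξc, ← Sum.elim_comp_inl_inr ξb] at hA hz
    refine ⟨_, _, _, _, fun i => hξc _, fun i => hξc _, fun i => hξb _, fun i => hξb _, hA, ?_⟩
    rwa [fromCols_mulVec_sumElim, fromCols_mulVec_sumElim, zero_mulVec, zero_mulVec, add_zero,
      add_zero] at hz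
  · rintro ⟨ξc, ξc', ξb, ξb', hξc, hξc', hξb, hξb', hA, rfl⟩
    refine ⟨Sum.elim ξc ξc', Sum.elim ξb ξb', Sum.forall.2 ⟨hξc, hξc'⟩,
      Sum.forall.2 ⟨hξb, hξb'⟩, hA, ?_⟩
    simp only [fromCols_mulVec_sumElim, zero_mulVec, add_zero]

theorem intersection_constraints_iff {α : Type*} [Ring α]
    {m n gz gy kz ky rz ry : Type*} [Fintype n] [Fintype gz] [Fintype gy] [Fintype kz] [Fintype ky]
    (Gzc : Matrix n gz α) (Gzb : Matrix n kz α) (cz : n → α)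
    (Azc : Matrix rz gz α) (Azb : Matrix rz kz α) (bz : rz → α)
    (Gyc : Matrix m gy α) (Gyb : Matrix m ky α) (cy : m → α)
    (Ayc : Matrix ry gy α) (Ayb : Matrix ry ky α) (by' : ry → α)
    (R : Matrix m n α) (ξzc : gz → α) (ξyc : gy → α) (ξzb : kz → α) (ξyb : ky → α) :
    fromRows (fromBlocks Azc 0 0 Ayc) (fromCols (R * Gzc) (-Gyc)) *ᵥ Sum.elim ξzc ξyc +
        fromRows (fromBlocks Azb 0 0 Ayb) (fromCols (R * Gzb) (-Gyb)) *ᵥ Sum.elim ξzb ξyb =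
        Sum.elim (Sum.elim bz by') (cy - R *ᵥ cz) ↔
      Azc *ᵥ ξzc + Azb *ᵥ ξzb = bz ∧ Ayc *ᵥ ξyc + Ayb *ᵥ ξyb = by' ∧
        R *ᵥ (Gzc *ᵥ ξzc + Gzb *ᵥ ξzb + cz) = Gyc *ᵥ ξyc + Gyb *ᵥ ξyb + cy := by
  simp only [fromRows_mulVec, fromBlocks_mulVec, fromCols_mulVec_sumElim, Sum.elim_comp_inl,
    Sum.elim_comp_inr, zero_mulVec, add_zero, zero_add, ← Sum.elim_add_add, Sum.elim_eq_iff,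
    mulVec_add, mulVec_mulVec, neg_mulVec]
  refine and_assoc.trans (and_congr_right' (and_congr_right' ?_))
  rw [← sub_eq_zero, ← sub_eq_zero (a := _ + _ + R *ᵥ cz)]
  exact Iff.of_eq (congrArg (· = 0) (by abel))

/-- hybrid zonotopes are closed under generalized intersection. -/
theorem hybZono_generalized_intersection {n m ngz nbz ncz ngy nby ncy : ℕ}
    (Gzc : Matrix (Fin n) (Fin ngz) ℝ) (Gzb : Matrix (Fin n) (Fin nbz) ℝ) (cz : Fin n → ℝ)
    (Azc : Matrix (Fin ncz) (Fin ngz) ℝ) (Azb : Matrix (Fin ncz) (Fin nbz) ℝ) (bz : Fin ncz → ℝ)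
    (Gyc : Matrix (Fin m) (Fin ngy) ℝ) (Gyb : Matrix (Fin m) (Fin nby) ℝ) (cy : Fin m → ℝ)
    (Ayc : Matrix (Fin ncy) (Fin ngy) ℝ) (Ayb : Matrix (Fin ncy) (Fin nby) ℝ) (by' : Fin ncy → ℝ)
    (R : Matrix (Fin m) (Fin n) ℝ) :
    {z ∈ HybZono Gzc Gzb cz Azc Azb bz |
        R.mulVec z ∈ HybZono Gyc Gyb cy Ayc Ayb by'} =
      HybZono (Matrix.fromCols Gzc 0) (Matrix.fromCols Gzb 0) cz
        (Matrix.fromRows (Matrix.fromBlocks Azc 0 0 Ayc)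
          (Matrix.fromCols (R * Gzc) (-Gyc)))
        (Matrix.fromRows (Matrix.fromBlocks Azb 0 0 Ayb)
          (Matrix.fromCols (R * Gzb) (-Gyb)))
        (Sum.elim (Sum.elim bz by') (cy - R.mulVec cz)) := by
  ext z
  simp_rw [mem_hybZono_fromCols_zero_iff, intersection_constraints_iff, Set.mem_sep_iff]
  constructor
  · rintro ⟨⟨ξzc, ξzb, hzc, hzb, hAz, rfl⟩, ξyc, ξyb, hyc, hyb, hAy, hR⟩
    exact ⟨ξzc, ξyc, ξzb, ξyb, hzc, hyc, hzb, hyb, ⟨hAz, hAy, hR⟩, rfl⟩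
  · rintro ⟨ξzc, ξyc, ξzb, ξyb, hzc, hyc, hzb, hyb, ⟨hAz, hAy, hR⟩, rfl⟩
    exact ⟨⟨ξzc, ξzb, hzc, hzb, hAz, rfl⟩, ξyc, ξyb, hyc, hyb, hAy, hR⟩
end

section
/- Let S = ⋃_{i=1}^N P_i be a union of N V-rep polytopes in ℝ^n with shared vertex matrix V = [v_1, …, v_{n_v}] and incidence matrix M ∈ {0,1}^{n_v × N}, where P_i = {Vλ : λ ≥ 0, 1^T λ = 1, λ_j = 0 for all j with M_{(j,i)} = 0}. Let D = {(λ, μ) : λ ∈ [0,1]^{n_v}, 1^T λ = 1, μ ∈ {0,1}^N, 1^T μ = 1, λ ≤ Mμ}. Then S = {Vλ : (λ, μ) ∈ D}. -/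
/-- a union of V-rep polytopes with shared vertex matrix `V` and 0/1
incidence matrix `M` equals the image under `V` of the coupled simplex-selector set `D`. -/
theorem vrep_union_eq_image_of_selector {n nv N : ℕ}
    (V : Matrix (Fin n) (Fin nv) ℝ) (M : Matrix (Fin nv) (Fin N) ℝ)
    (hM : ∀ j i, M j i = 0 ∨ M j i = 1) :
    (⋃ i : Fin N, {x | ∃ lam : Fin nv → ℝ, (∀ j, 0 ≤ lam j) ∧ (∑ j, lam j) = 1 ∧
        (∀ j, M j i = 0 → lam j = 0) ∧ x = V.mulVec lam}) =
      {x | ∃ lam : Fin nv → ℝ, ∃ mu : Fin N → ℝ,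
        (∀ j, lam j ∈ Set.Icc (0 : ℝ) 1) ∧ (∑ j, lam j) = 1 ∧
        (∀ i, mu i = 0 ∨ mu i = 1) ∧ (∑ i, mu i) = 1 ∧
        (∀ j, lam j ≤ M.mulVec mu j) ∧ x = V.mulVec lam} := by
  ext x
  simp only [Set.mem_iUnion, Set.mem_setOf_eq]
  constructor
  · rintro ⟨i, lam, hpos, hsum, hzero, rfl⟩
    refine ⟨lam, fun i' => if i' = i then 1 else 0, ?_, hsum, ?_, ?_, ?_, rfl⟩
    · intro j
      refine ⟨hpos j, ?_⟩
      calc lam j ≤ ∑ j', lam j' :=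
            Finset.single_le_sum (fun j' _ => hpos j') (Finset.mem_univ j)
        _ = 1 := hsum
    · intro i'; by_cases h : i' = i <;> simp [h]
    · simp
    · intro j
      have : M.mulVec (fun i' => if i' = i then 1 else 0) j = M j i := by
        simp [Matrix.mulVec, dotProduct]
      rw [this]
      rcases hM j i with h | h
      · rw [h, hzero j h]
      · rw [h]
        calc lam j ≤ ∑ j', lam j' :=
              Finset.single_le_sum (fun j' _ => hpos j') (Finset.mem_univ j)
          _ = 1 := hsum
  · rintro ⟨lam, mu, hicc, hsum, hmu01, hmusum, hle, rfl⟩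
    have hmupos : ∀ i, 0 ≤ mu i := fun i => by rcases hmu01 i with h | h <;> simp [h]
    -- find the index where mu = 1
    have hex : ∃ i, mu i ≠ 0 := by
      by_contra h
      push_neg at h
      simp [h] at hmusum
    obtain ⟨i, hi⟩ := hex
    have hi1 : mu i = 1 := (hmu01 i).resolve_left hi
    have hrest : ∀ i', i' ≠ i → mu i' = 0 := by
      intro i' hne
      have hsum' : ∑ i'' ∈ Finset.univ.erase i, mu i'' = 0 := by
        have := Finset.add_sum_erase Finset.univ mu (Finset.mem_univ i)
        rw [hmusum, hi1] at this
        linarith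
      have := Finset.sum_eq_zero_iff_of_nonneg
        (fun i'' _ => hmupos i'') |>.mp hsum'
      exact this i' (Finset.mem_erase.mpr ⟨hne, Finset.mem_univ i'⟩)
    have hmv : ∀ j, M.mulVec mu j = M j i := by
      intro j
      simp only [Matrix.mulVec, dotProduct]
      rw [Finset.sum_eq_single i]
      · rw [hi1, mul_one]
      · intro i' _ hne; rw [hrest i' hne, mul_zero]
      · intro h; exact absurd (Finset.mem_univ i) h
    refine ⟨i, lam, fun j => (hicc j).1, hsum, ?_, rfl⟩
    intro j hj
    have := hle j
    rw [hmv j, hj] at this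
    exact le_antisymm this (hicc j).1
end
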